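/- Consider sequences z : ℕ → Z, v : ℕ → V, w : ℕ → W satisfying z_{t+1} = K(z_t ⊗ v_t) and w_t = C z_t for linear maps K, C. Fix N ≥ 1 and data indices 0,…,T+N−1. If there exists a vector g = (g_1,…,g_{T+1}) of scalars such that Σ_{i=1}^{T+1} g_i · (z_{i-1+s} ⊗ v_{i-1+s}) = z_{t+s} ⊗ v_{t+s} for all s = 0,…,N−1, then Σ_{i=1}^{T+1} g_i · w_{i+s} = w_{t+1+s} for all s = 0,…,N−1. -/
import Mathlib

open scoped TensorProduct

/-- For sequences satisfying the bilinear Koopman recursion `z_{t+1} = K (z_t ⊗ v_t)`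
and `w_t = C z_t`, if the scalars `g_1, …, g_{T+1}` reproduce the stacked tensor window,
`Σ_i g_i (z_{i-1+s} ⊗ v_{i-1+s}) = z_{t+s} ⊗ v_{t+s}` for all `s = 0, …, N−1`, then they also
reproduce the shifted output window: `Σ_i g_i w_{i+s} = w_{t+1+s}` for all `s = 0, …, N−1`.
(Here `i` ranges over `Fin (T+1)`, corresponding to the 1-based `i = 1, …, T+1`.) -/
theorem stmt13 {Z V W : Type*}
    [AddCommGroup Z] [Module ℝ Z] [AddCommGroup V] [Module ℝ V] [AddCommGroup W] [Module ℝ W]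
    (K : Z ⊗[ℝ] V →ₗ[ℝ] Z) (C : Z →ₗ[ℝ] W)
    (z : ℕ → Z) (v : ℕ → V) (w : ℕ → W)
    (hz : ∀ t, z (t + 1) = K (z t ⊗ₜ[ℝ] v t)) (hw : ∀ t, w t = C (z t))
    (N T t : ℕ) (hN : 1 ≤ N) (g : Fin (T + 1) → ℝ)
    (hg : ∀ s < N, ∑ i : Fin (T + 1), g i • (z ((i : ℕ) + s) ⊗ₜ[ℝ] v ((i : ℕ) + s))
      = z (t + s) ⊗ₜ[ℝ] v (t + s)) :
    ∀ s < N, ∑ i : Fin (T + 1), g i • w ((i : ℕ) + 1 + s) = w (t + 1 + s) := by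
  intro s hs
  have h := congrArg (C.comp K) (hg s hs)
  simp only [map_sum, map_smul] at h
  calc ∑ i : Fin (T + 1), g i • w ((i : ℕ) + 1 + s)
      = ∑ i : Fin (T + 1), g i • (C.comp K) (z ((i : ℕ) + s) ⊗ₜ[ℝ] v ((i : ℕ) + s)) := by
        refine Finset.sum_congr rfl fun i _ => ?_
        have : (i : ℕ) + 1 + s = (i : ℕ) + s + 1 := by omega
        rw [this, hw, hz]; rfl
    _ = (C.comp K) (z (t + s) ⊗ₜ[ℝ] v (t + s)) := h
    _ = w (t + 1 + s) := by
        have : t + 1 + s = t + s + 1 := by omega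
        rw [this, hw, hz]; rfl
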